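/- The plank P is not realcompact: there do not exist an index set ι and a closed embedding of P into ℝ^ι (with the product topology). -/

import Mathlib

open Set Topology

universe u

/-- A topological space is *realcompact* if it admits a closed embedding into a power
of the real line. -/
def Realcompact (X : Type u) [TopologicalSpace X] : Prop :=
  ∃ (ι : Type u) (f : X → ι → ℝ), Topology.IsClosedEmbedding f

/-- `ω₁`, the set of countable ordinals, as a type carrying the discrete topology. -/
def W1 : Type := (Cardinal.aleph 1).ord.ToType

instance : TopologicalSpace W1 := ⊥
instance : DiscreteTopology W1 := ⟨rfl⟩

/-- The Stone–Čech compactification `βℕ` of the discrete space `ℕ`. -/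
abbrev betaN : Type := StoneCech ℕ

/-- The Stone–Čech remainder `ℕ* = βℕ \ ℕ`. -/
def Nstar : Set betaN := (Set.range (stoneCechUnit : ℕ → betaN))ᶜ

/-- The plank `P`: the subspace `(ω₁⁺ × βℕ) \ ({∞₁} × ℕ*)` of `ω₁⁺ × βℕ`, where `ω₁⁺` is the
one-point compactification of the discrete space `ω₁`. -/
abbrev P : Type :=
  {p : OnePoint W1 × betaN // ¬ (p.1 = OnePoint.infty ∧ p.2 ∈ Nstar)}

/-- The point `(∞₁, n)` of the right-hand side `R = {∞₁} × ℕ` of `P`. -/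
def PmkR (n : ℕ) : P :=
  ⟨(OnePoint.infty, stoneCechUnit n), fun h => h.2 ⟨n, rfl⟩⟩

/-!
Fix `u ∈ ℕ*` and let the column index `α` of the point `(α, u)` go to infinity along the
cocountable filter of `ω₁`. A continuous `g : P → ℝ` satisfies `g (α, n) → g (∞₁, n)` along the
cofinite filter for each `n ∈ ℕ`, so `g (α, n) = g (∞₁, n)` for all `n` and cocountably many
`α`; by density of `ℕ` in `βℕ` the functions `g (α, ·)` then all coincide, so `g (α, u)` is
eventually constant. Hence the image of `(α, u)` under any continuous map `P → ℝ^ι` converges;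
for a closed embedding the limit is the image of a point of `P` to which `(α, u)` would then
converge in `P`. But no point of `P` is such a limit: `(β, x)` has the neighbourhood
`{β} × βℕ`, and `(∞₁, n)` the neighbourhood `ω₁⁺ × {n}`, which misses the row `ω₁ × {u}`.
-/

open Filter

namespace Filter

instance countableInterFilter_cocountable {α : Type*} :
    CountableInterFilter (cocountable : Filter α) :=
  CardinalInterFilter.toCountableInterFilter _ Cardinal.aleph0_lt_aleph_one

instance cocountable_neBot {α : Type*} [Uncountable α] : (cocountable : Filter α).NeBot :=
  ⟨fun h => not_countable_univ (by simpa using mem_cocountable.1 (empty_mem_iff_bot.2 h))⟩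

theorem cocountable_le_cofinite {α : Type*} : (cocountable : Filter α) ≤ cofinite :=
  fun _ hs => mem_cocountable.2 (mem_cofinite.1 hs).countable

theorem Tendsto.eventually_eq_of_countableInterFilter {α Y : Type*} [TopologicalSpace Y]
    [FirstCountableTopology Y] [T1Space Y] {l : Filter α} [CountableInterFilter l]
    {f : α → Y} {y : Y} (h : Tendsto f l (𝓝 y)) : ∀ᶠ a in l, f a = y := by
  obtain ⟨s, hs⟩ := (𝓝 y).exists_antitone_basis
  have hker : ⋂ n, s n = {y} := by
    rw [← ker_nhds y, hs.toHasBasis.ker]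
    simp only [iInter_true]
  filter_upwards [eventually_countable_forall.2 fun n => h (hs.mem n)] with a ha
  simpa [← mem_singleton_iff, ← hker] using ha

end Filter

theorem not_realcompact_of_tendsto {X : Type u} [TopologicalSpace X]
    {α : Type*} {l : Filter α} [l.NeBot] {φ : α → X}
    (hconv : ∀ g : X → ℝ, Continuous g → ∃ c, Tendsto (g ∘ φ) l (𝓝 c))
    (hnolim : ∀ p, ¬ Tendsto φ l (𝓝 p)) : ¬ Realcompact X := by
  rintro ⟨ι, f, hf⟩
  choose c hc using fun i => hconv (fun x => f x i) ((continuous_apply i).comp hf.continuous)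
  have hlim : Tendsto (f ∘ φ) l (𝓝 c) := tendsto_pi_nhds.2 hc
  obtain ⟨p, rfl⟩ : c ∈ range f :=
    hf.isClosed_range.mem_of_tendsto hlim (Eventually.of_forall fun _ => mem_range_self _)
  exact hnolim p (hf.isInducing.tendsto_nhds_iff.2 hlim)

section StoneCech

variable {α : Type*} [TopologicalSpace α] [DiscreteTopology α]

theorem isOpen_singleton_stoneCechUnit (a : α) : IsOpen {stoneCechUnit a} := by
  obtain ⟨V, hV, hpre⟩ := isInducing_stoneCechUnit.isOpen_iff.1 (isOpen_discrete {a})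
  have hVrange : V ∩ range stoneCechUnit = {stoneCechUnit a} := by
    rw [inter_comm, ← image_preimage_eq_range_inter, hpre, image_singleton]
  suffices V = {stoneCechUnit a} from this ▸ hV
  refine subset_antisymm ?_ (hVrange ▸ inter_subset_left)
  simpa [hVrange] using denseRange_stoneCechUnit.open_subset_closure_inter hV

theorem range_stoneCechUnit_ne_univ [Infinite α] :
    range (stoneCechUnit : α → StoneCech α) ≠ univ := by
  intro h
  have : CompactSpace α := ⟨isInducing_stoneCechUnit.isCompact_iff.2
    (by simpa [image_univ, h] using isCompact_univ)⟩
  have : Finite α := finite_of_compact_of_discrete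
  exact not_finite α

end StoneCech

instance : Uncountable W1 := by
  rw [← not_countable_iff, ← Cardinal.mk_le_aleph0_iff, W1, Cardinal.mk_toType,
    Cardinal.card_ord, not_le]
  exact Cardinal.aleph0_lt_aleph_one

def Pmk (α : W1) (x : betaN) : P :=
  ⟨((α : OnePoint W1), x), fun h => OnePoint.coe_ne_infty α h.1⟩

theorem continuous_Pmk (α : W1) : Continuous (Pmk α) :=
  (continuous_const.prodMk continuous_id).subtype_mk _

theorem tendsto_Pmk_cofinite (n : ℕ) :
    Tendsto (fun α => Pmk α (stoneCechUnit n)) cofinite (𝓝 (PmkR n)) := by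
  refine tendsto_subtype_rng.2 (Tendsto.prodMk_nhds ?_ tendsto_const_nhds)
  simpa [coclosedCompact_eq_cocompact, cocompact_eq_cofinite] using
    OnePoint.tendsto_coe_infty (X := W1)

theorem exists_tendsto_comp_Pmk_cocountable {g : P → ℝ} (hg : Continuous g) (x : betaN) :
    ∃ c, Tendsto (fun α => g (Pmk α x)) cocountable (𝓝 c) := by
  have hrow : ∀ᶠ α in cocountable, ∀ n, g (Pmk α (stoneCechUnit n)) = g (PmkR n) :=
    eventually_countable_forall.2 fun n =>
      ((hg.tendsto _).comp (tendsto_Pmk_cofinite n)).mono_left cocountable_le_cofinite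
        |>.eventually_eq_of_countableInterFilter
  obtain ⟨α₀, hα₀⟩ := hrow.exists
  refine ⟨g (Pmk α₀ x), tendsto_const_nhds.congr' ?_⟩
  filter_upwards [hrow] with α hα
  refine congrFun (Continuous.ext_on denseRange_stoneCechUnit (hg.comp (continuous_Pmk α₀))
    (hg.comp (continuous_Pmk α)) ?_) x
  rintro _ ⟨n, rfl⟩
  exact (hα₀ n).trans (hα n).symm

theorem not_tendsto_Pmk_cocountable {u : betaN} (hu : u ∈ Nstar) (p : P) :
    ¬ Tendsto (fun α => Pmk α u) cocountable (𝓝 p) := by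
  intro hlim
  obtain ⟨N, hNp, hNu⟩ : ∃ N ∈ 𝓝 p, ∀ᶠ α in cocountable, Pmk α u ∉ N := by
    rcases hp : p.val.1 with _ | β
    · obtain ⟨n, hn⟩ : p.val.2 ∈ range stoneCechUnit := not_not.1 fun h => p.2 ⟨hp, h⟩
      refine ⟨{q | q.val.2 = stoneCechUnit n}, ?_, Eventually.of_forall fun α h => hu ⟨n, h.symm⟩⟩
      exact ((isOpen_singleton_stoneCechUnit n).preimage
        (continuous_snd.comp continuous_subtype_val)).mem_nhds hn.symm
    · refine ⟨{q | q.val.1 = β}, ?_, ?_⟩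
      · refine IsOpen.mem_nhds ?_ hp
        exact (image_singleton (f := ((↑) : W1 → OnePoint W1)) ▸
          OnePoint.isOpen_image_coe.2 (isOpen_discrete {β})).preimage
          (continuous_fst.comp continuous_subtype_val)
      · filter_upwards [cocountable_le_cofinite (Finite.compl_mem_cofinite (finite_singleton β))]
          with α hα h
        exact hα (OnePoint.coe_injective h)
  obtain ⟨α, hout, hin⟩ := (hNu.and (hlim hNp)).exists
  exact hout hin

/-- The plank `P` is not realcompact. -/
theorem statement9 : ¬ Realcompact P := by
  obtain ⟨u, hu⟩ : Nstar.Nonempty := nonempty_compl.2 range_stoneCechUnit_ne_univ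
  exact not_realcompact_of_tendsto
    (fun g hg => exists_tendsto_comp_Pmk_cocountable hg u) (not_tendsto_Pmk_cocountable hu)
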